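/- For every symmetric probability measure x on ℝ̄ and every natural number k ≥ 1, ∫ tanh(α/2)^{2k-1} x(dα) = ∫ tanh(α/2)^{2k} x(dα). -/

import Mathlib

open MeasureTheory Real Set Filter
open scoped ENNReal NNReal

noncomputable section

/-- Exponential on the extended reals, valued in `ℝ≥0∞` (with `e^{-∞}=0`, `e^{∞}=∞`). -/
def eexp (a : EReal) : ℝ≥0∞ :=
  if a = ⊤ then ⊤ else if a = ⊥ then 0 else ENNReal.ofReal (Real.exp a.toReal)

/-- A finite Borel measure `x` on the extended reals is *symmetric* if
`x(-E) = ∫_E e^{-α} x(dα)` for every Borel set `E`. -/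
def SymmetricM (x : Measure EReal) : Prop :=
  ∀ E : Set EReal, MeasurableSet E →
    x ((fun a : EReal => -a) ⁻¹' E) = ∫⁻ a in E, eexp (-a) ∂x

/-- `tanh(α/2)` extended continuously to the extended reals. -/
def etanh (a : EReal) : ℝ :=
  if a = ⊤ then 1 else if a = ⊥ then -1 else Real.tanh (a.toReal / 2)

/-- The moment functional `M_k(x) = ∫ tanh^{2k}(α/2) x(dα)`. -/
def Mk (k : ℕ) (x : Measure EReal) : ℝ := ∫ a, (etanh a) ^ (2 * k) ∂x

/-- The entropy integrand `log₂(1+e^{-α})`, with the convention that it vanishes at `±∞`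
(symmetric measures put no mass at `-∞`). -/
def entFn (a : EReal) : ℝ :=
  if a = ⊤ then 0 else if a = ⊥ then 0 else Real.logb 2 (1 + Real.exp (-a.toReal))

/-- The entropy functional `H(x) = ∫ log₂(1+e^{-α}) x(dα)`. -/
def Hent (x : Measure EReal) : ℝ := ∫ a, entFn a ∂x

/-- Variable-node convolution `⊛`: pushforward of the product measure under addition. -/
def vconv (x y : Measure EReal) : Measure EReal :=
  Measure.map (fun p : EReal × EReal => p.1 + p.2) (x.prod y)

/-- Inverse hyperbolic tangent on `ℝ`. -/
def artanh (t : ℝ) : ℝ := Real.log ((1 + t) / (1 - t)) / 2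

/-- The check-node combination map `(α₁,α₂) ↦ 2 tanh⁻¹(tanh(α₁/2) tanh(α₂/2))` on `ℝ̄ × ℝ̄`. -/
def boxFn (p : EReal × EReal) : EReal :=
  if etanh p.1 * etanh p.2 = 1 then ⊤
  else if etanh p.1 * etanh p.2 = -1 then ⊥
  else ((2 * _root_.artanh (etanh p.1 * etanh p.2) : ℝ) : EReal)

/-- Check-node convolution `⊞`: pushforward of the product measure under `boxFn`. -/
def cconv (x y : Measure EReal) : Measure EReal :=
  Measure.map boxFn (x.prod y)

/-- Degradation order: `Degraded x' x` means `x' ⪰ x`, i.e.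
`∫ f(|tanh(α/2)|) dx' ≥ ∫ f(|tanh(α/2)|) dx` for all concave non-increasing `f : [0,1] → ℝ`. -/
def Degraded (x' x : Measure EReal) : Prop :=
  ∀ f : ℝ → ℝ, ConcaveOn ℝ (Set.Icc (0:ℝ) 1) f → AntitoneOn f (Set.Icc (0:ℝ) 1) →
    ∫ a, f |etanh a| ∂x ≤ ∫ a, f |etanh a| ∂x'

/-- The coefficients `γ_k = 1/((log 2)·2k·(2k−1))`. -/
def gam (k : ℕ) : ℝ := 1 / (Real.log 2 * (2 * (k : ℝ)) * (2 * (k : ℝ) - 1))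

/-- The entropy distance `d_H(x₁,x₂) = Σ_{k≥1} γ_k |M_k(x₁) − M_k(x₂)|`. -/
def dH (x y : Measure EReal) : ℝ := ∑' k : ℕ, gam (k + 1) * |Mk (k + 1) x - Mk (k + 1) y|

/-- The Bhattacharyya integrand `e^{-α/2}` (vanishing at `±∞`, as symmetric measures put
no mass at `-∞`). -/
def bFn (a : EReal) : ℝ :=
  if a = ⊤ then 0 else if a = ⊥ then 0 else Real.exp (-(a.toReal) / 2)

/-- The Bhattacharyya functional `B(x) = ∫ e^{-α/2} x(dα)`. -/
def Bhat (x : Measure EReal) : ℝ := ∫ a, bFn a ∂x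

/-- `n`-fold variable-node convolution power `x^{⊛n}` (with `x^{⊛0} = Δ_0`). -/
def vpow (x : Measure EReal) : ℕ → Measure EReal
  | 0 => Measure.dirac 0
  | n + 1 => vconv (vpow x n) x


lemma abs_tanh_le_one (r : ℝ) : |Real.tanh r| ≤ 1 := by
  rw [abs_le, Real.tanh_eq_sinh_div_cosh, Real.sinh_eq, Real.cosh_eq]
  have h1 := Real.exp_pos r
  have h2 := Real.exp_pos (-r)
  constructor
  · rw [le_div_iff₀ (by linarith)]; linarith
  · rw [div_le_one (by linarith)]; linarith

lemma continuous_tanh : Continuous Real.tanh := by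
  have : Real.tanh = fun r => Real.sinh r / Real.cosh r := by
    funext r; exact Real.tanh_eq_sinh_div_cosh r
  rw [this]
  exact Real.continuous_sinh.div Real.continuous_cosh fun r => (Real.cosh_pos r).ne'

lemma exp_neg_mul_one_add_tanh (r : ℝ) :
    Real.exp (-r) * (1 + Real.tanh (r / 2)) = 1 - Real.tanh (r / 2) := by
  rw [Real.tanh_eq_sinh_div_cosh, Real.sinh_eq, Real.cosh_eq]
  have h1 := Real.exp_pos (r / 2)
  have h2 := Real.exp_pos (-(r / 2))
  have hc : Real.exp (r / 2) + Real.exp (-(r / 2)) > 0 := by linarith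
  have huv : Real.exp (r / 2) * Real.exp (-(r / 2)) = 1 := by
    rw [← Real.exp_add]; ring_nf; exact Real.exp_zero
  have hvv : Real.exp (-r) = Real.exp (-(r / 2)) * Real.exp (-(r / 2)) := by
    rw [← Real.exp_add]; ring_nf
  have h3 : Real.exp (-r / 2) = Real.exp (-(r / 2)) := by congr 1; ring
  field_simp
  linear_combination (2 * Real.exp (-(r/2))) * huv + (2 * Real.exp (r/2)) * hvv


/-- For every symmetric probability measure `x` on the extended reals and
every `k ≥ 1`, `∫ tanh(α/2)^{2k-1} x(dα) = ∫ tanh(α/2)^{2k} x(dα)`. -/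
theorem stmt2 (x : Measure EReal) [IsProbabilityMeasure x] (hx : SymmetricM x)
    (k : ℕ) (hk : 1 ≤ k) :
    ∫ a, (etanh a) ^ (2 * k - 1) ∂x = ∫ a, (etanh a) ^ (2 * k) ∂x := by
  have hmne : Measurable (fun a : EReal => -a) := measurable_neg
  -- measure puts no mass at ⊥
  have hbot : x {⊥} = 0 := by
    have h1 := hx {⊥} (measurableSet_singleton ⊥)
    have hpre : (fun a : EReal => -a) ⁻¹' {⊥} = {⊤} := by
      ext a; simp [EReal.neg_eq_bot_iff]
    rw [hpre, lintegral_singleton] at h1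
    have : eexp (-(⊥ : EReal)) = ⊤ := by simp [eexp]
    rw [this] at h1
    by_contra hne
    rw [ENNReal.top_mul hne] at h1
    exact (measure_ne_top x {⊤}) h1
  -- the a.e.-finite density
  set nnd : EReal → ℝ≥0 := fun a => if a = ⊤ then 0 else (Real.exp (-a.toReal)).toNNReal with hnnd
  have hnndm : Measurable nnd := by
    apply Measurable.ite (measurableSet_eq) measurable_const
    exact measurable_real_toNNReal.comp (Real.measurable_exp.comp measurable_ereal_toReal.neg)
  have hmap : Measure.map (fun a : EReal => -a) x = x.withDensity (fun a => (nnd a : ℝ≥0∞)) := by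
    ext E hE
    rw [Measure.map_apply hmne hE, withDensity_apply _ hE, hx E hE]
    apply setLIntegral_congr_fun_ae hE
    have hae : ∀ᵐ a ∂x, a ≠ ⊥ := by
      rw [ae_iff]; simpa using hbot
    filter_upwards [hae] with a hab _
    rcases eq_or_ne a ⊤ with rfl | htop
    · simp [eexp, nnd]
    · have h1 : (-a : EReal) ≠ ⊤ := by simp [EReal.neg_eq_top_iff, hab]
      have h2 : (-a : EReal) ≠ ⊥ := by simp [EReal.neg_eq_bot_iff, htop]
      simp only [eexp, h1, h2, if_false, nnd, htop]
      rw [EReal.toReal_neg_eq, ENNReal.ofReal, Real.toNNReal]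
  have habs : ∀ a : EReal, |etanh a| ≤ 1 := by
    intro a
    unfold etanh
    split
    · simp
    · split
      · simp
      · exact abs_tanh_le_one _
  have hetm : Measurable etanh := by
    unfold etanh
    apply Measurable.ite (measurableSet_eq) measurable_const
    apply Measurable.ite (measurableSet_eq) measurable_const
    exact continuous_tanh.measurable.comp (measurable_ereal_toReal.div_const 2)
  have hetneg : ∀ a : EReal, etanh (-a) = -etanh a := by
    intro a
    rcases eq_or_ne a ⊤ with rfl | h1
    · simp [etanh]
    rcases eq_or_ne a ⊥ with rfl | h2
    · simp [etanh]
    have h3 : (-a : EReal) ≠ ⊤ := by simp [EReal.neg_eq_top_iff, h2]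
    have h4 : (-a : EReal) ≠ ⊥ := by simp [EReal.neg_eq_bot_iff, h1]
    simp only [etanh, h1, h2, h3, h4, if_false]
    rw [EReal.toReal_neg_eq, neg_div, Real.tanh_neg]
  set m : ℕ := 2 * k - 1 with hm
  have hodd : Odd m := ⟨k - 1, by omega⟩
  have h2k : 2 * k = m + 1 := by omega
  set F : EReal → ℝ := fun a => etanh a ^ m * (1 - etanh a) with hF
  set g : EReal → ℝ := fun a => etanh a ^ m * (1 + etanh a) with hg
  have hgm : Measurable g := ((hetm.pow_const m).mul (measurable_const.add hetm))
  have hFm : Measurable F := ((hetm.pow_const m).mul (measurable_const.sub hetm))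
  -- change of variables
  have key : ∫ a, g (-a) ∂x = ∫ a, nnd a • g a ∂x :=
    calc ∫ a, g (-a) ∂x
        = ∫ a, g a ∂(Measure.map (fun a : EReal => -a) x) :=
          (integral_map hmne.aemeasurable hgm.aestronglyMeasurable).symm
      _ = ∫ a, g a ∂(x.withDensity fun a => (nnd a : ℝ≥0∞)) := by rw [hmap]
      _ = ∫ a, nnd a • g a ∂x := integral_withDensity_eq_integral_smul hnndm g
  -- left side is -∫ F
  have hL : ∀ a : EReal, g (-a) = -(F a) := by
    intro a
    simp only [hg, hF, hetneg a, hodd.neg_pow]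
    ring
  -- right side is ∫ F a.e.
  have hR : ∀ᵐ a ∂x, nnd a • g a = F a := by
    have hae : ∀ᵐ a ∂x, a ≠ ⊥ := by
      rw [ae_iff]; simpa using hbot
    filter_upwards [hae] with a hab
    rcases eq_or_ne a ⊤ with rfl | htop
    · simp [nnd, hg, hF, etanh]
    · have hx1 : etanh a = Real.tanh (a.toReal / 2) := by simp [etanh, htop, hab]
      have hnn : (nnd a : ℝ) = Real.exp (-a.toReal) := by
        simp only [nnd, htop, if_false]
        rw [Real.coe_toNNReal _ (Real.exp_pos _).le]
      rw [NNReal.smul_def, smul_eq_mul]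
      simp only [hg, hF, hx1, hnn]
      rw [show Real.exp (-a.toReal) * (Real.tanh (a.toReal / 2) ^ m * (1 + Real.tanh (a.toReal / 2)))
          = Real.tanh (a.toReal / 2) ^ m * (Real.exp (-a.toReal) * (1 + Real.tanh (a.toReal / 2))) by ring,
        exp_neg_mul_one_add_tanh]
  have hFzero : ∫ a, F a ∂x = 0 := by
    have h1 : ∫ a, g (-a) ∂x = -∫ a, F a ∂x := by
      simp only [hL]; exact integral_neg F
    have h2 : ∫ a, nnd a • g a ∂x = ∫ a, F a ∂x := integral_congr_ae hR
    rw [h1, h2] at key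
    linarith
  -- integrability of the powers
  have hint : ∀ n : ℕ, Integrable (fun a => etanh a ^ n) x := by
    intro n
    refine ⟨((hetm.pow_const n)).aestronglyMeasurable, ?_⟩
    apply HasFiniteIntegral.of_bounded (C := 1)
    filter_upwards with a
    rw [Real.norm_eq_abs, abs_pow]
    exact pow_le_one₀ (abs_nonneg _) (habs a)
  have hsplit : ∀ a : EReal, F a = etanh a ^ m - etanh a ^ (2 * k) := by
    intro a; rw [h2k, pow_succ]; ring
  have : ∫ a, (etanh a ^ m - etanh a ^ (2 * k)) ∂x = 0 := by
    rw [← hFzero]; exact integral_congr_ae (Filter.Eventually.of_forall fun a => (hsplit a).symm)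
  rw [integral_sub (hint m) (hint (2 * k))] at this
  linarith
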